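/- Over the alphabet {0, 1}, the complement of the iterated shuffle of the set S = {00, 000, 11, 111, 01, 10} is exactly the finite set {0, 1, 001, 010, 100, 011, 101, 110}; in particular S^† is co-finite. -/

import Mathlib

/-!
A shuffle adds letter counts, so the vectors `(#0, #1)` of the words of `S^†` form the
additive monoid generated by `(2,0), (3,0), (0,2), (0,3), (1,1)`, whose gaps are
`(1,0), (0,1), (2,1), (1,2)`; the words with a gap vector are exactly the eight listed ones.
Conversely, `S` contains every word of length two as well as `000` and `111`, so a nonempty
word `y` whose vector is not a gap has a subword `u ∈ S` whose removal leaves a non-gap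
vector; `y` is a shuffle of `u` with the remaining letters, and we conclude by induction on
the length.
-/

/-- `Shuffle u v w` means that the word `w` is an interleaving (shuffle) of the
words `u` and `v`. -/
inductive Shuffle {α : Type*} : List α → List α → List α → Prop
  | nil : Shuffle [] [] []
  | left {a : α} {u v w : List α} : Shuffle u v w → Shuffle (a :: u) v (a :: w)
  | right {a : α} {u v w : List α} : Shuffle u v w → Shuffle u (a :: v) (a :: w)

/-- `IterShuffle S y` means `y` belongs to the iterated shuffle `S^†`, i.e. `y`
can be obtained by shuffling together finitely many (possibly zero) words of `S`. -/
inductive IterShuffle {α : Type*} (S : Set (List α)) : List α → Prop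
  | nil : IterShuffle S []
  | step {u w y : List α} : u ∈ S → IterShuffle S w → Shuffle u w y → IterShuffle S y

namespace Shuffle

variable {α : Type*} {u v w : List α}

theorem length_eq (h : Shuffle u v w) : w.length = u.length + v.length := by
  induction h <;> simp only [List.length_cons, List.length_nil] at * <;> omega

theorem count_eq [DecidableEq α] (c : α) (h : Shuffle u v w) :
    w.count c = u.count c + v.count c := by
  induction h <;> simp only [List.count_cons, List.count_nil] at * <;> split_ifs <;> omega

theorem exists_of_sublist (h : u.Sublist w) : ∃ v, Shuffle u v w := by
  induction h with
  | slnil => exact ⟨[], .nil⟩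
  | cons a _ ih => obtain ⟨v, hv⟩ := ih; exact ⟨a :: v, .right hv⟩
  | cons_cons a _ ih => obtain ⟨v, hv⟩ := ih; exact ⟨v, .left hv⟩

end Shuffle

theorem List.pair_sublist_or_of_mem {α : Type*} {a b : α} {l : List α} (hab : a ≠ b)
    (ha : a ∈ l) (hb : b ∈ l) : [a, b].Sublist l ∨ [b, a].Sublist l := by
  induction l with
  | nil => simp at ha
  | cons x t ih =>
    rw [List.mem_cons] at ha hb
    by_cases hxa : x = a
    · subst hxa
      exact .inl ((List.singleton_sublist.2 (hb.resolve_left hab.symm)).cons_cons x)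
    by_cases hxb : x = b
    · subst hxb
      exact .inr ((List.singleton_sublist.2 (ha.resolve_left hab)).cons_cons x)
    rcases ih (ha.resolve_left (Ne.symm hxa)) (hb.resolve_left (Ne.symm hxb)) with h | h
    exacts [.inl (h.cons x), .inr (h.cons x)]

abbrev gens : Set (List (Fin 2)) := {[0, 0], [0, 0, 0], [1, 1], [1, 1, 1], [0, 1], [1, 0]}

abbrev gapWords : Set (List (Fin 2)) :=
  {[0], [1], [0, 0, 1], [0, 1, 0], [1, 0, 0], [0, 1, 1], [1, 0, 1], [1, 1, 0]}

def IsGap (a b : ℕ) : Prop :=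
  (a = 1 ∧ b = 0) ∨ (a = 0 ∧ b = 1) ∨ (a = 2 ∧ b = 1) ∨ (a = 1 ∧ b = 2)

theorem count_zero_add_count_one (y : List (Fin 2)) : y.count 0 + y.count 1 = y.length := by
  induction y with
  | nil => rfl
  | cons a t ih => fin_cases a <;> simp <;> omega

theorem isGap_count_iff (y : List (Fin 2)) : IsGap (y.count 0) (y.count 1) ↔ y ∈ gapWords := by
  constructor
  · intro h
    have hlen : y.length = 1 ∨ y.length = 3 := by
      rw [← count_zero_add_count_one]; unfold IsGap at h; omega
    rcases hlen with h1 | h3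
    · obtain ⟨x, rfl⟩ := List.length_eq_one_iff.1 h1
      fin_cases x <;> simp
    · obtain ⟨x, y, z, rfl⟩ := List.length_eq_three.1 h3
      fin_cases x <;> fin_cases y <;> fin_cases z <;> simp_all [IsGap]
  · rintro (rfl | rfl | rfl | rfl | rfl | rfl | rfl | rfl) <;> simp [IsGap]

theorem not_isGap_add {u : List (Fin 2)} (hu : u ∈ gens) {a b : ℕ} (h : ¬ IsGap a b) :
    ¬ IsGap (u.count 0 + a) (u.count 1 + b) := by
  unfold IsGap at *
  rcases hu with rfl | rfl | rfl | rfl | rfl | rfl <;> simp <;> omega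

theorem not_isGap_of_iterShuffle {y : List (Fin 2)} (h : IterShuffle gens y) :
    ¬ IsGap (y.count 0) (y.count 1) := by
  induction h with
  | nil => simp [IsGap]
  | step hu _ hs ih => rw [hs.count_eq, hs.count_eq]; exact not_isGap_add hu ih

theorem exists_mem_gens_sublist {y : List (Fin 2)} (hne : y ≠ [])
    (hy : ¬ IsGap (y.count 0) (y.count 1)) :
    ∃ u ∈ gens, u.Sublist y ∧ ¬ IsGap (y.count 0 - u.count 0) (y.count 1 - u.count 1) := by
  have hpos : y.count 0 + y.count 1 ≠ 0 := by
    rwa [count_zero_add_count_one, Ne, List.length_eq_zero_iff]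
  have rep {n : ℕ} {c : Fin 2} (h : n ≤ y.count c) : (List.replicate n c).Sublist y :=
    List.replicate_sublist_iff.2 h
  have hstep :
      (2 ≤ y.count 0 ∧ ¬ IsGap (y.count 0 - 2) (y.count 1)) ∨
      (3 ≤ y.count 0 ∧ ¬ IsGap (y.count 0 - 3) (y.count 1)) ∨
      (2 ≤ y.count 1 ∧ ¬ IsGap (y.count 0) (y.count 1 - 2)) ∨
      (3 ≤ y.count 1 ∧ ¬ IsGap (y.count 0) (y.count 1 - 3)) ∨
      (1 ≤ y.count 0 ∧ 1 ≤ y.count 1 ∧ ¬ IsGap (y.count 0 - 1) (y.count 1 - 1)) := by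
    unfold IsGap at hy ⊢; omega
  rcases hstep with ⟨h, hgap⟩ | ⟨h, hgap⟩ | ⟨h, hgap⟩ | ⟨h, hgap⟩ | ⟨h0, h1, hgap⟩
  · exact ⟨[0, 0], by simp, rep h, by simpa using hgap⟩
  · exact ⟨[0, 0, 0], by simp, rep h, by simpa using hgap⟩
  · exact ⟨[1, 1], by simp, rep h, by simpa using hgap⟩
  · exact ⟨[1, 1, 1], by simp, rep h, by simpa using hgap⟩
  · rcases List.pair_sublist_or_of_mem (by decide) (List.count_pos_iff.1 h0)
      (List.count_pos_iff.1 h1) with h | h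
    · exact ⟨[0, 1], by simp, h, by simpa using hgap⟩
    · exact ⟨[1, 0], by simp, h, by simpa using hgap⟩

theorem iterShuffle_of_not_isGap (y : List (Fin 2)) (hy : ¬ IsGap (y.count 0) (y.count 1)) :
    IterShuffle gens y := by
  rcases eq_or_ne y [] with rfl | hne
  · exact .nil
  obtain ⟨u, hu, hsub, hgap⟩ := exists_mem_gens_sublist hne hy
  obtain ⟨w, hs⟩ := Shuffle.exists_of_sublist hsub
  have hu0 : 0 < u.length := List.length_pos_iff.2 (by rintro rfl; simp at hu)
  have : w.length < y.length := by rw [hs.length_eq]; omega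
  refine .step hu (iterShuffle_of_not_isGap w ?_) hs
  rwa [hs.count_eq, hs.count_eq, Nat.add_sub_cancel_left, Nat.add_sub_cancel_left] at hgap
termination_by y.length

theorem iterShuffle_gens_iff (y : List (Fin 2)) :
    IterShuffle gens y ↔ ¬ IsGap (y.count 0) (y.count 1) :=
  ⟨not_isGap_of_iterShuffle, iterShuffle_of_not_isGap y⟩

/-- Over the alphabet `{0, 1}`, the complement of the iterated shuffle of
`S = {00, 000, 11, 111, 01, 10}` is exactly
`{0, 1, 001, 010, 100, 011, 101, 110}`; in particular `S^†` is co-finite. -/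
theorem iterShuffle_binary_example :
    {w : List (Fin 2) |
        ¬ IterShuffle ({[0, 0], [0, 0, 0], [1, 1], [1, 1, 1], [0, 1], [1, 0]} :
          Set (List (Fin 2))) w} =
      {[0], [1], [0, 0, 1], [0, 1, 0], [1, 0, 0], [0, 1, 1], [1, 0, 1], [1, 1, 0]} ∧
    {w : List (Fin 2) |
        ¬ IterShuffle ({[0, 0], [0, 0, 0], [1, 1], [1, 1, 1], [0, 1], [1, 0]} :
          Set (List (Fin 2))) w}.Finite := by
  have h : {w | ¬ IterShuffle gens w} = gapWords := by
    ext y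
    rw [← isGap_count_iff]
    exact not_iff_comm.1 (iterShuffle_gens_iff y).symm
  exact ⟨h, h ▸ Set.toFinite _⟩
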